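/- arXiv:1711.07339 — 2 statements merged into one kernel-verified Lean document; each statement's English description precedes it below -/
import Mathlib

section
/- The odd-indexed part of the Mittag-Leffler series with parameter 1/2 satisfies: for all real z, ∑_{n=0}^∞ z^{2n+1}/Γ(n + 3/2) = exp(z²)·erf(z). -/
/-!
Write `S z` for the series. Differentiating termwise and using `Γ(n + 3/2) = (n + 1/2) Γ(n + 1/2)`
and `Γ(1/2) = √π` gives the linear equation `S' = 2 z S + 2 / √π` with `S 0 = 0`. Hence
`(exp (-z²) S)' = (2 / √π) exp (-z²)`, and integrating from `0` to `z` gives `exp (-z²) S z = erf z`.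
-/

open Real

/-- Error function. -/
noncomputable def erf (z : ℝ) : ℝ := (2 / Real.sqrt π) * ∫ t in (0:ℝ)..z, Real.exp (-t ^ 2)

open Nat in
theorem summable_pow_div_Gamma_add (r : ℝ) {a : ℝ} (ha : 0 ≤ a) :
    Summable fun n : ℕ => r ^ n / Gamma (n + a) := by
  rw [← summable_nat_add_iff 2]
  have hexp : Summable fun n : ℕ => |r| ^ (n + 2) / (n + 1)! :=
    (((summable_nat_add_iff 1).mpr (summable_pow_div_factorial |r|)).mul_left |r|).congr
      fun n => by ring
  refine .of_norm_bounded hexp fun n => ?_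
  have hfac : ((n + 1)! : ℝ) ≤ Gamma ((n + 2 : ℕ) + a) := by
    rw [← Gamma_nat_eq_factorial]
    refine Gamma_strictMonoOn_Ici.monotoneOn ?_ ?_ ?_ <;> simp <;> linarith
  have hfac_pos : (0 : ℝ) < (n + 1)! := by positivity
  rw [norm_div, norm_pow, norm_eq_abs, norm_eq_abs, abs_of_pos (hfac_pos.trans_le hfac)]
  gcongr

noncomputable def mittagLefflerHalfOdd (z : ℝ) : ℝ :=
  ∑' n : ℕ, z ^ (2 * n + 1) / Gamma (n + 3/2)

theorem hasDerivAt_pow_div_Gamma_add_three_halves (n : ℕ) (z : ℝ) :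
    HasDerivAt (fun x => x ^ (2 * n + 1) / Gamma (n + 3/2))
      (2 * ((z ^ 2) ^ n / Gamma (n + 1/2))) z := by
  have hrec : Gamma (n + 3/2) = (n + 1/2) * Gamma (n + 1/2) := by
    rw [← Gamma_add_one (by positivity)]
    ring_nf
  have hG : Gamma (n + 1/2) ≠ 0 := (Gamma_pos_of_pos (by positivity)).ne'
  refine ((hasDerivAt_pow (2 * n + 1) z).div_const (Gamma (n + 3/2))).congr_deriv ?_
  rw [hrec, ← pow_mul]
  field_simp
  push_cast
  ring

theorem tsum_two_mul_sq_pow_div_Gamma (y : ℝ) :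
    ∑' n : ℕ, 2 * ((y ^ 2) ^ n / Gamma (n + 1/2))
      = 2 * y * mittagLefflerHalfOdd y + 2 / √π := by
  rw [((summable_pow_div_Gamma_add (y ^ 2) (by norm_num)).mul_left 2).tsum_eq_zero_add,
    mittagLefflerHalfOdd, ← tsum_mul_left]
  have hshift (n : ℕ) : 2 * ((y ^ 2) ^ (n + 1) / Gamma ((n + 1 : ℕ) + 1/2))
      = 2 * y * (y ^ (2 * n + 1) / Gamma (n + 3/2)) := by
    push_cast
    ring_nf
  simp only [hshift, pow_zero, Nat.cast_zero, zero_add, Gamma_one_half_eq]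
  ring

theorem hasDerivAt_mittagLefflerHalfOdd (y : ℝ) :
    HasDerivAt mittagLefflerHalfOdd (2 * y * mittagLefflerHalfOdd y + 2 / √π) y := by
  set R := |y| + 1
  rw [← tsum_two_mul_sq_pow_div_Gamma]
  refine hasDerivAt_tsum_of_isPreconnected
    (u := fun n : ℕ => 2 * ((R ^ 2) ^ n / Gamma (n + 1/2)))
    ((summable_pow_div_Gamma_add _ (by norm_num)).mul_left 2) Metric.isOpen_ball
    (convex_ball 0 R).isPreconnected
    (fun n x _ => hasDerivAt_pow_div_Gamma_add_three_halves n x) (fun n x hx => ?_)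
    (Metric.mem_ball_self (by positivity)) ?_ (by simp [R])
  · have hxR : |x| ≤ R := by simpa using (Metric.mem_ball.mp hx).le
    have hG : 0 < Gamma (n + 1/2) := Gamma_pos_of_pos (by positivity)
    rw [norm_mul, norm_div, norm_pow, norm_pow, norm_eq_abs, norm_eq_abs, norm_eq_abs,
      abs_of_pos hG, abs_two]
    gcongr
  · simp

theorem hasDerivAt_exp_neg_sq_mul_mittagLefflerHalfOdd (t : ℝ) :
    HasDerivAt (fun x => exp (-x ^ 2) * mittagLefflerHalfOdd x) (2 / √π * exp (-t ^ 2)) t := by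
  have hexp : HasDerivAt (fun x => exp (-x ^ 2)) (exp (-t ^ 2) * -(2 * t)) t := by
    simpa using (hasDerivAt_pow 2 t).neg.exp
  refine (hexp.mul (hasDerivAt_mittagLefflerHalfOdd t)).congr_deriv ?_
  ring

theorem mittagLefflerHalfOdd_zero : mittagLefflerHalfOdd 0 = 0 := by
  simp [mittagLefflerHalfOdd]

theorem erf_eq_exp_neg_sq_mul_mittagLefflerHalfOdd (z : ℝ) :
    erf z = exp (-z ^ 2) * mittagLefflerHalfOdd z := by
  have hFTC := intervalIntegral.integral_eq_sub_of_hasDerivAt (a := 0) (b := z)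
    (fun t _ => hasDerivAt_exp_neg_sq_mul_mittagLefflerHalfOdd t)
    ((by fun_prop : Continuous fun t : ℝ => 2 / √π * exp (-t ^ 2)).intervalIntegrable _ _)
  rw [intervalIntegral.integral_const_mul, mittagLefflerHalfOdd_zero, mul_zero, sub_zero] at hFTC
  rw [erf, hFTC]

theorem odd_part_mittagLeffler_half (z : ℝ) :
    ∑' n : ℕ, z ^ (2 * n + 1) / Real.Gamma (n + 3/2) = Real.exp (z ^ 2) * erf z := by
  rw [erf_eq_exp_neg_sq_mul_mittagLefflerHalfOdd, ← mul_assoc, ← exp_add, add_neg_cancel,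
    exp_zero, one_mul, mittagLefflerHalfOdd]
end

section
/- Equivalence of the Cauchy problem with a Volterra-type equation (sufficiency direction): Let 0 < α ≤ 1, γ = α + β(1−α) with 0 ≤ β ≤ 1, ψ increasing C¹ with ψ' > 0, and g : [a,T] → ℝ continuous. If y(t) = (ψ(t)−ψ(a))^{γ−1}/Γ(γ)·y_a + (1/Γ(α))∫_a^t ψ'(s)(ψ(t)−ψ(s))^{α−1} g(s) ds, then the limit of (ψ(t)−ψ(a))^{1−γ}y(t) as t → a⁺ equals y_a/Γ(γ); i.e., the weighted initial condition I^{1−γ;ψ}_{a+}y(a) = y_a is satisfied in the sense that (ψ(t)−ψ(a))^{1−γ}y(t) → y_a/Γ(γ). -/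
/-!
The weight (ψ t - ψ a)^(1-γ) turns the first term into the constant y_a / Γ(γ). In the Volterra
term, s ↦ -(ψ t - ψ s)^α / α is a primitive of ψ'(s) (ψ t - ψ s)^(α-1), so bounding |g| by C gives
|∫| ≤ C (ψ t - ψ a)^α / α. After the weight the Volterra term is O((ψ t - ψ a)^(α+1-γ)), and
α + 1 - γ = (1 - β) + β α > 0.
-/

open Real Filter Set Topology MeasureTheory

variable {ψ ψ' g : ℝ → ℝ} {a b α : ℝ}

theorem hasDerivAt_neg_rpow_sub_div {s : ℝ} (hα : α ≠ 0) (hψs : HasDerivAt ψ (ψ' s) s)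
    (hs : ψ s < ψ b) :
    HasDerivAt (fun r => -(ψ b - ψ r) ^ α / α) (ψ' s * (ψ b - ψ s) ^ (α - 1)) s := by
  have h := ((hψs.const_sub (ψ b)).rpow_const (p := α) (Or.inl (sub_pos.2 hs).ne')).neg
  refine (h.div_const α).congr_deriv ?_
  field_simp

theorem continuousOn_neg_rpow_sub_div (hα : 0 < α) (hψc : ContinuousOn ψ (Icc a b)) :
    ContinuousOn (fun r => -(ψ b - ψ r) ^ α / α) (Icc a b) :=
  (((continuousOn_const.sub hψc).rpow_const fun _ _ => Or.inr hα.le).neg).div_const α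

theorem intervalIntegrable_deriv_mul_rpow_sub (hab : a ≤ b) (hα : 0 < α)
    (hψc : ContinuousOn ψ (Icc a b)) (hψm : StrictMonoOn ψ (Icc a b))
    (hψd : ∀ s ∈ Ioo a b, HasDerivAt ψ (ψ' s) s) (hψ' : ∀ s ∈ Ioo a b, 0 ≤ ψ' s) :
    IntervalIntegrable (fun s => ψ' s * (ψ b - ψ s) ^ (α - 1)) volume a b := by
  have hlt : ∀ s ∈ Ioo a b, ψ s < ψ b := fun s hs =>
    hψm (Ioo_subset_Icc_self hs) (right_mem_Icc.2 hab) hs.2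
  refine (intervalIntegrable_iff_integrableOn_Ioc_of_le hab).2 <|
    intervalIntegral.integrableOn_deriv_of_nonneg (continuousOn_neg_rpow_sub_div hα hψc)
      (fun s hs => hasDerivAt_neg_rpow_sub_div hα.ne' (hψd s hs) (hlt s hs)) fun s hs => ?_
  exact mul_nonneg (hψ' s hs) (rpow_nonneg (sub_pos.2 (hlt s hs)).le _)

theorem integral_deriv_mul_rpow_sub (hab : a ≤ b) (hα : 0 < α)
    (hψc : ContinuousOn ψ (Icc a b)) (hψm : StrictMonoOn ψ (Icc a b))
    (hψd : ∀ s ∈ Ioo a b, HasDerivAt ψ (ψ' s) s) (hψ' : ∀ s ∈ Ioo a b, 0 ≤ ψ' s) :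
    ∫ s in a..b, ψ' s * (ψ b - ψ s) ^ (α - 1) = (ψ b - ψ a) ^ α / α := by
  rw [intervalIntegral.integral_eq_sub_of_hasDerivAt_of_le hab
    (continuousOn_neg_rpow_sub_div hα hψc)
    (fun s hs => hasDerivAt_neg_rpow_sub_div hα.ne' (hψd s hs)
      (hψm (Ioo_subset_Icc_self hs) (right_mem_Icc.2 hab) hs.2))
    (intervalIntegrable_deriv_mul_rpow_sub hab hα hψc hψm hψd hψ')]
  simp only [sub_self, zero_rpow hα.ne', neg_zero, zero_div, zero_sub]
  ring

theorem abs_integral_deriv_mul_rpow_sub_mul_le {C : ℝ} (hab : a ≤ b) (hα : 0 < α)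
    (hψc : ContinuousOn ψ (Icc a b)) (hψm : StrictMonoOn ψ (Icc a b))
    (hψd : ∀ s ∈ Ioo a b, HasDerivAt ψ (ψ' s) s) (hψ' : ∀ s ∈ Ioo a b, 0 ≤ ψ' s)
    (hg : ∀ s ∈ Icc a b, |g s| ≤ C) :
    |∫ s in a..b, ψ' s * (ψ b - ψ s) ^ (α - 1) * g s| ≤ C * ((ψ b - ψ a) ^ α / α) := by
  rw [← Real.norm_eq_abs, ← integral_deriv_mul_rpow_sub hab hα hψc hψm hψd hψ',
    ← intervalIntegral.integral_const_mul]
  refine intervalIntegral.norm_integral_le_of_norm_le hab ?_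
    (IntervalIntegrable.const_mul (intervalIntegrable_deriv_mul_rpow_sub hab hα hψc hψm hψd hψ') C)
  -- at `s = b` the kernel `(ψ b - ψ b) ^ (α - 1)` need not vanish, and `ψ' b` is not controlled
  filter_upwards [(countable_singleton b).ae_notMem volume] with s hsb hs
  have hs' : s ∈ Ioo a b := ⟨hs.1, lt_of_le_of_ne hs.2 hsb⟩
  have hψsb : ψ s ≤ ψ b :=
    hψm.monotoneOn (Ioc_subset_Icc_self hs) (right_mem_Icc.2 hab) hs.2
  have hkernel : 0 ≤ ψ' s * (ψ b - ψ s) ^ (α - 1) :=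
    mul_nonneg (hψ' s hs') (rpow_nonneg (sub_nonneg.2 hψsb) _)
  rw [norm_mul, Real.norm_of_nonneg hkernel, Real.norm_eq_abs, mul_comm C]
  exact mul_le_mul_of_nonneg_left (hg s (Ioc_subset_Icc_self hs)) hkernel

theorem tendsto_rpow_mul_of_abs_le_rpow {ι : Type*} {l : Filter ι} {x F : ι → ℝ} {C p q : ℝ}
    (hx : Tendsto x l (𝓝 0)) (hx0 : ∀ᶠ i in l, 0 < x i) (hF : ∀ᶠ i in l, |F i| ≤ C * x i ^ p)
    (hpq : 0 < p + q) :
    Tendsto (fun i => x i ^ q * F i) l (𝓝 0) := by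
  have hlim : Tendsto (fun i => C * x i ^ (p + q)) l (𝓝 0) := by
    simpa [zero_rpow hpq.ne'] using
      ((continuousAt_rpow_const 0 (p + q) (Or.inr hpq.le)).tendsto.comp hx).const_mul C
  refine squeeze_zero_norm' ?_ hlim
  filter_upwards [hx0, hF] with i hxi hFi
  rw [norm_mul, Real.norm_of_nonneg (rpow_nonneg hxi.le q), Real.norm_eq_abs, rpow_add hxi]
  calc x i ^ q * |F i| ≤ x i ^ q * (C * x i ^ p) :=
        mul_le_mul_of_nonneg_left hFi (rpow_nonneg hxi.le q)
    _ = C * (x i ^ p * x i ^ q) := by ring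

theorem tendsto_rpow_mul_volterra_integral_nhdsGT {T q : ℝ} (haT : a < T) (hα : 0 < α)
    (hq : 0 < α + q) (hψm : StrictMonoOn ψ (Icc a T))
    (hψd : ∀ s ∈ Icc a T, HasDerivAt ψ (ψ' s) s) (hψ' : ∀ s ∈ Icc a T, 0 ≤ ψ' s)
    (hg : ContinuousOn g (Icc a T)) :
    Tendsto (fun t => (ψ t - ψ a) ^ q * ∫ s in a..t, ψ' s * (ψ t - ψ s) ^ (α - 1) * g s)
      (𝓝[>] a) (𝓝 0) := by
  have hψc : ContinuousOn ψ (Icc a T) := fun s hs => (hψd s hs).continuousAt.continuousWithinAt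
  obtain ⟨C, hC⟩ := isCompact_Icc.exists_bound_of_continuousOn hg
  have hIoc : Ioc a T ∈ 𝓝[>] a := Ioc_mem_nhdsGT haT
  have hx : Tendsto (fun t => ψ t - ψ a) (𝓝[>] a) (𝓝 0) := by
    simpa using ((hψd a (left_mem_Icc.2 haT.le)).continuousAt.tendsto.sub_const (ψ a)).mono_left
      nhdsWithin_le_nhds
  have hpos : ∀ t ∈ Ioc a T, 0 < ψ t - ψ a := fun t ht =>
    sub_pos.2 (hψm (left_mem_Icc.2 haT.le) (Ioc_subset_Icc_self ht) ht.1)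
  refine tendsto_rpow_mul_of_abs_le_rpow (C := C / α) hx (eventually_of_mem hIoc hpos) ?_ hq
  filter_upwards [hIoc] with t ht
  have hsub : Icc a t ⊆ Icc a T := Icc_subset_Icc_right ht.2
  refine (abs_integral_deriv_mul_rpow_sub_mul_le ht.1.le hα (hψc.mono hsub) (hψm.mono hsub)
    (fun s hs => hψd s (hsub (Ioo_subset_Icc_self hs)))
    (fun s hs => hψ' s (hsub (Ioo_subset_Icc_self hs))) fun s hs => hC s (hsub hs)).trans_eq ?_
  ring

theorem volterra_weighted_initial_condition_general
    (a T α β γ y_a : ℝ) (haT : a < T)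
    (hα : 0 < α) (hβ : 0 ≤ β) (hβ1 : β ≤ 1)
    (hγ : γ = α + β * (1 - α))
    (ψ : ℝ → ℝ)
    (hψm : StrictMonoOn ψ (Set.Icc a T))
    (hψ' : ∀ s ∈ Set.Icc a T, 0 < deriv ψ s)
    (g : ℝ → ℝ) (hg : ContinuousOn g (Set.Icc a T))
    (y : ℝ → ℝ)
    (hy : ∀ t ∈ Set.Ioc a T, y t =
      (ψ t - ψ a) ^ (γ - 1) / Real.Gamma γ * y_a +
        (1 / Real.Gamma α) * ∫ s in a..t, deriv ψ s * (ψ t - ψ s) ^ (α - 1) * g s) :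
    Tendsto (fun t => (ψ t - ψ a) ^ (1 - γ) * y t) (nhdsWithin a (Set.Ioi a))
      (nhds (y_a / Real.Gamma γ)) := by
  -- `deriv ψ s` is `0` where `ψ` is not differentiable
  have hψd : ∀ s ∈ Icc a T, HasDerivAt ψ (deriv ψ s) s := fun s hs =>
    (differentiableAt_of_deriv_ne_zero (hψ' s hs).ne').hasDerivAt
  have hexp : 0 < α + (1 - γ) := by
    rcases hβ1.lt_or_eq with hβ1 | rfl
    · nlinarith [mul_nonneg hβ hα.le]
    · linarith
  have hvolterra := (tendsto_rpow_mul_volterra_integral_nhdsGT haT hα hexp hψm hψd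
    (fun s hs => (hψ' s hs).le) hg).const_mul (1 / Gamma α)
  have hsplit : ∀ᶠ t in 𝓝[>] a, y_a / Gamma γ + 1 / Gamma α * ((ψ t - ψ a) ^ (1 - γ) *
      ∫ s in a..t, deriv ψ s * (ψ t - ψ s) ^ (α - 1) * g s) = (ψ t - ψ a) ^ (1 - γ) * y t := by
    filter_upwards [Ioc_mem_nhdsGT haT] with t ht
    have hweight : (ψ t - ψ a) ^ (1 - γ) * (ψ t - ψ a) ^ (γ - 1) = 1 := by
      rw [← rpow_add (sub_pos.2 (hψm (left_mem_Icc.2 haT.le) (Ioc_subset_Icc_self ht) ht.1))]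
      simp
    rw [hy t ht]
    linear_combination (-(y_a / Gamma γ)) * hweight
  simpa using (tendsto_const_nhds (x := y_a / Gamma γ)).add hvolterra |>.congr' hsplit

theorem volterra_weighted_initial_condition
    (a T α β γ y_a : ℝ) (haT : a < T)
    (hα : 0 < α) (hα1 : α ≤ 1) (hβ : 0 ≤ β) (hβ1 : β ≤ 1)
    (hγ : γ = α + β * (1 - α))
    (ψ : ℝ → ℝ) (hψ : ContDiffOn ℝ 1 ψ (Set.Icc a T))
    (hψm : StrictMonoOn ψ (Set.Icc a T))
    (hψ' : ∀ s ∈ Set.Icc a T, 0 < deriv ψ s)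
    (g : ℝ → ℝ) (hg : ContinuousOn g (Set.Icc a T))
    (y : ℝ → ℝ)
    (hy : ∀ t ∈ Set.Ioc a T, y t =
      (ψ t - ψ a) ^ (γ - 1) / Real.Gamma γ * y_a +
        (1 / Real.Gamma α) * ∫ s in a..t, deriv ψ s * (ψ t - ψ s) ^ (α - 1) * g s) :
    Tendsto (fun t => (ψ t - ψ a) ^ (1 - γ) * y t) (nhdsWithin a (Set.Ioi a))
      (nhds (y_a / Real.Gamma γ)) :=
  volterra_weighted_initial_condition_general a T α β γ y_a haT hα hβ hβ1 hγ ψ hψm hψ' g hg y hy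
end
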